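/- arXiv:2111.11922 — 3 statements merged into one kernel-verified Lean document; each statement's English description precedes it below -/
import Mathlib

section
/- Let M be an n×n integer matrix with determinant ±1 that has a complex eigenvalue which is a root of unity (some root of its characteristic polynomial over ℂ is a root of unity). Then the induced automorphism of the n-torus (ℝ/ℤ)^n, sending x mod ℤ^n to Mx mod ℤ^n, is not ergodic with respect to the Haar probability measure; in particular it is not strong mixing. -/
open MeasureTheory Filter Matrix

/-- A measure-preserving map `T` on a measure space is strong mixing if for all
measurable sets `A, B` one has `μ (A ∩ T⁻ⁿ B) → μ A * μ B`. -/
def StrongMixing {X : Type*} [MeasurableSpace X] (μ : Measure X) (T : X → X) : Prop :=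
  ∀ A B : Set X, MeasurableSet A → MeasurableSet B →
    Tendsto (fun n : ℕ => μ (A ∩ (T^[n]) ⁻¹' B)) atTop (nhds (μ A * μ B))

/-- A map `T` on a measure space is ergodic if every measurable invariant set is null
or conull. -/
def IsErgodicMap {X : Type*} [MeasurableSpace X] (μ : Measure X) (T : X → X) : Prop :=
  ∀ U : Set X, MeasurableSet U → T ⁻¹' U = U → μ U = 0 ∨ μ Uᶜ = 0

/-!
If `z` is an eigenvalue of `M` with `z ^ m = 1`, then `1` is an eigenvalue of the integer
matrix `M ^ m`, so some nonzero `v ∈ ℤⁿ` satisfies `v ᵥ* M ^ m = v`. The character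
`x ↦ v ⬝ x` of the torus is then `Tᵐ`-invariant, and summing `‖(v ᵥ* M ^ j) ⬝ x‖` over
`j < m` gives a continuous `T`-invariant function which vanishes at `0` but not everywhere.
Its superlevel sets are invariant open sets that are neither null nor conull.
Strong mixing fails as well, since it forces `μ U = μ U ^ 2` for every invariant set `U`.
-/

theorem StrongMixing.isErgodicMap {X : Type*} [MeasurableSpace X] {μ : Measure X}
    [IsProbabilityMeasure μ] {T : X → X} (hT : StrongMixing μ T) : IsErgodicMap μ T := by
  intro U hU hTU
  have hsq : μ U * μ U = μ U := by
    have h := hT U U hU hU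
    simp only [(Function.IsFixedPt.preimage_iterate hTU _).eq, Set.inter_self] at h
    exact tendsto_nhds_unique h tendsto_const_nhds
  rw [prob_compl_eq_zero_iff hU]
  rcases eq_or_ne (μ U) 0 with h0 | h0
  · exact Or.inl h0
  · exact Or.inr ((ENNReal.mul_eq_left h0 (measure_ne_top μ U)).1 hsq)

theorem not_isErgodicMap_of_continuous_invariant {X : Type*} [TopologicalSpace X]
    [MeasurableSpace X] [OpensMeasurableSpace X] {μ : Measure X} [μ.IsOpenPosMeasure]
    {T : X → X} (g : X → ℝ) (hg : Continuous g) (hgT : ∀ x, g (T x) = g x) {x y : X}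
    (hxy : g x < g y) : ¬ IsErgodicMap μ T := by
  obtain ⟨a, hxa, hay⟩ := exists_between hxy
  have hinv : T ⁻¹' (g ⁻¹' Set.Ioi a) = g ⁻¹' Set.Ioi a := by
    ext; simp only [Set.mem_preimage, hgT]
  have hlower : g ⁻¹' Set.Iio a ⊆ (g ⁻¹' Set.Ioi a)ᶜ := fun z (h : g z < a) (h' : a < g z) =>
    lt_asymm h h'
  intro hT
  rcases hT _ (measurableSet_lt measurable_const hg.measurable) hinv with h | h
  · exact (isOpen_Ioi.preimage hg).measure_ne_zero μ ⟨y, hay⟩ h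
  · exact (isOpen_Iio.preimage hg).measure_ne_zero μ ⟨x, hxa⟩ (measure_mono_null hlower h)

theorem Matrix.det_one_sub_pow_eq_zero_of_isRoot_charpoly {ι R : Type*} [Fintype ι]
    [DecidableEq ι] [CommRing R] (A : Matrix ι ι R) {z : R} (hz : A.charpoly.IsRoot z)
    {m : ℕ} (hzm : z ^ m = 1) : (1 - A ^ m).det = 0 := by
  have hcomm : Commute (scalar ι z) A := scalar_commute z (fun _ => Commute.all _ _) A
  have hfactor : 1 - A ^ m =
      (∑ i ∈ Finset.range m, scalar ι z ^ i * A ^ (m - 1 - i)) * (scalar ι z - A) := by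
    rw [hcomm.geom_sum₂_mul, ← map_pow, hzm, map_one]
  rw [hfactor, det_mul, ← eval_charpoly, hz.eq_zero, mul_zero]

theorem Matrix.exists_ne_zero_vecMul_pow_eq_self {ι R K : Type*} [Fintype ι] [DecidableEq ι]
    [CommRing R] [IsDomain R] [CommRing K] (f : R →+* K) (hf : Function.Injective f)
    (A : Matrix ι ι R) {z : K} (hz : (A.map f).charpoly.IsRoot z) {m : ℕ} (hzm : z ^ m = 1) :
    ∃ v ≠ 0, v ᵥ* A ^ m = v := by
  have hK : (f.mapMatrix (1 - A ^ m)).det = 0 := by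
    simpa only [map_sub, map_pow, map_one, RingHom.mapMatrix_apply] using
      (A.map f).det_one_sub_pow_eq_zero_of_isRoot_charpoly hz hzm
  have hR : (1 - A ^ m).det = 0 := hf (by rw [RingHom.map_det, hK, map_zero])
  obtain ⟨v, hv, hvA⟩ := exists_vecMul_eq_zero_iff.2 hR
  exact ⟨v, hv, by rwa [vecMul_sub, vecMul_one, sub_eq_zero, eq_comm] at hvA⟩

section MatrixAction

variable {ι R A : Type*} [Fintype ι] [Semiring R] [AddCommMonoid A] [Module R A]

def Matrix.smulVec (M : Matrix ι ι R) (x : ι → A) : ι → A := fun i => ∑ j, M i j • x j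

def smulDot (v : ι → R) (x : ι → A) : A := ∑ i, v i • x i

theorem smulDot_smulVec (v : ι → R) (M : Matrix ι ι R) (x : ι → A) :
    smulDot v (M.smulVec x) = smulDot (v ᵥ* M) x := by
  simp only [smulDot, smulVec, vecMul, dotProduct, Finset.smul_sum, Finset.sum_smul, smul_smul]
  exact Finset.sum_comm

@[simp]
theorem smulDot_zero (v : ι → R) : smulDot v (0 : ι → A) = 0 := by
  simp [smulDot]

theorem smulDot_single [DecidableEq ι] (v : ι → R) (i : ι) (a : A) :
    smulDot v (Pi.single i a) = v i • a := by
  simp [smulDot, Pi.single_apply]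

theorem continuous_smulDot [TopologicalSpace A] [ContinuousAdd A] [ContinuousConstSMul R A]
    (v : ι → R) : Continuous (smulDot v : (ι → A) → A) := by
  unfold smulDot; fun_prop

theorem sum_range_smulDot_vecMul_pow_smulVec [DecidableEq ι] {β : Type*} [AddCommMonoid β]
    (φ : A → β) {M : Matrix ι ι R} {v : ι → R} {m : ℕ} (hv : v ᵥ* M ^ m = v) (x : ι → A) :
    ∑ j ∈ Finset.range m, φ (smulDot (v ᵥ* M ^ j) (M.smulVec x)) =
      ∑ j ∈ Finset.range m, φ (smulDot (v ᵥ* M ^ j) x) := by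
  simp only [smulDot_smulVec, vecMul_vecMul, ← pow_succ]
  rcases m with _ | k
  · rfl
  · rw [Finset.sum_range_succ, hv, Finset.sum_range_succ' _ k, pow_zero, vecMul_one, add_comm]

end MatrixAction

instance : IsProbabilityMeasure (volume : Measure UnitAddCircle) :=
  ⟨by simp [AddCircle.measure_univ]⟩

theorem toral_automorphism_root_of_unity_not_ergodic_general
    (n : ℕ) (M : Matrix (Fin n) (Fin n) ℤ)
    (hM : ∃ z : ℂ, (M.map (Int.cast : ℤ → ℂ)).charpoly.IsRoot z ∧
      ∃ m : ℕ, 1 ≤ m ∧ z ^ m = 1) :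
    ¬ IsErgodicMap volume
        (fun x : Fin n → AddCircle (1 : ℝ) => fun i => ∑ j, M i j • x j) ∧
    ¬ StrongMixing volume
        (fun x : Fin n → AddCircle (1 : ℝ) => fun i => ∑ j, M i j • x j) := by
  obtain ⟨z, hz, m, hm, hzm⟩ := hM
  obtain ⟨v, hv, hvM⟩ :=
    M.exists_ne_zero_vecMul_pow_eq_self (Int.castRingHom ℂ) Int.cast_injective hz hzm
  obtain ⟨i, hi⟩ := Function.ne_iff.1 hv
  let g (x : Fin n → UnitAddCircle) : ℝ := ∑ j ∈ Finset.range m, ‖smulDot (v ᵥ* M ^ j) x‖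
  let x₀ : Fin n → UnitAddCircle :=
    Pi.single i (DivisibleBy.div ((1 / 2 : ℝ) : UnitAddCircle) (v i))
  have hx₀ : ‖smulDot v x₀‖ = 1 / 2 := by
    rw [smulDot_single, DivisibleBy.div_cancel _ hi, AddCircle.norm_half_period_eq]
    norm_num
  have hg : g 0 < g x₀ := by
    calc g 0 = 0 := by simp [g]
      _ < ‖smulDot (v ᵥ* M ^ 0) x₀‖ := by rw [pow_zero, vecMul_one, hx₀]; norm_num
      _ ≤ g x₀ := Finset.single_le_sum (f := fun j => ‖smulDot (v ᵥ* M ^ j) x₀‖)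
          (fun _ _ => norm_nonneg _) (Finset.mem_range.2 hm)
  have hErg : ¬ IsErgodicMap (volume : Measure (Fin n → UnitAddCircle)) M.smulVec :=
    not_isErgodicMap_of_continuous_invariant g
      (continuous_finsetSum _ fun _ _ => (continuous_smulDot _).norm)
      (sum_range_smulDot_vecMul_pow_smulVec _ hvM) hg
  exact ⟨hErg, fun h => hErg h.isErgodicMap⟩

/-- if an `n × n` integer matrix `M` with determinant `±1` has a complex
eigenvalue which is a root of unity, then the induced automorphism of the torus
`(ℝ/ℤ)ⁿ`, `x ↦ M x`, is not ergodic with respect to the Haar probability measure;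
in particular it is not strong mixing. -/
theorem toral_automorphism_root_of_unity_not_ergodic
    (n : ℕ) (M : Matrix (Fin n) (Fin n) ℤ)
    (hdet : M.det = 1 ∨ M.det = -1)
    (hM : ∃ z : ℂ, (M.map (Int.cast : ℤ → ℂ)).charpoly.IsRoot z ∧
      ∃ m : ℕ, 1 ≤ m ∧ z ^ m = 1) :
    ¬ IsErgodicMap volume
        (fun x : Fin n → AddCircle (1 : ℝ) => fun i => ∑ j, M i j • x j) ∧
    ¬ StrongMixing volume
        (fun x : Fin n → AddCircle (1 : ℝ) => fun i => ∑ j, M i j • x j) :=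
  toral_automorphism_root_of_unity_not_ergodic_general n M hM
end

section
/- Let M be an n×n integer matrix with determinant ±1 such that no complex eigenvalue of M is a root of unity. Then for every nonzero integer vector a ∈ ℤ^n and every integer vector b ∈ ℤ^n, there exists K ∈ ℕ such that for all k ≥ K one has (M^T)^k a ≠ b; consequently, for all k ≥ K, the correlation integral ∫_{(ℝ/ℤ)^n} e^{2πi⟨a, M^k x⟩} e^{-2πi⟨b, x⟩} dx with respect to the Haar probability measure equals 0. -/
/-!
If `(Mᵀ)ᵏ a = b` held for two exponents `k₀ < k`, invertibility of `Mᵀ` over `ℤ` would make `a` a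
periodic point of `v ↦ Mᵀ v`, say `(Mᵀ)ᵐ a = a` with `m ≥ 1`. Then `1` is an eigenvalue of `(Mᵀ)ᵐ`,
so by spectral mapping some eigenvalue of `M` is an `m`-th root of unity. Hence `b` is hit at most
once. Once `(Mᵀ)ᵏ a ≠ b`, the integrand is the character of the nonzero frequency `(Mᵀ)ᵏ a - b`,
and translating by half a period in a coordinate where that frequency is nonzero negates it.
-/

open MeasureTheory Matrix Filter Function

theorem Function.Injective.injective_iterate_apply {α : Type*} {f : α → α} (hf : Injective f)
    {a : α} (ha : a ∉ periodicPts f) : Injective fun k ↦ f^[k] a := by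
  intro i j hij
  by_contra hne
  wlog hlt : i < j generalizing i j
  · exact this hij.symm (Ne.symm hne) (by omega)
  refine ha ⟨j - i, by omega, hf.iterate i ?_⟩
  simp only at hij
  rw [← iterate_add_apply, Nat.add_sub_cancel' hlt.le, hij]

theorem Function.Injective.eventually_iterate_apply_ne {α : Type*} {f : α → α} (hf : Injective f)
    {a : α} (ha : a ∉ periodicPts f) (b : α) : ∀ᶠ k in atTop, f^[k] a ≠ b :=
  Nat.cofinite_eq_atTop ▸ (hf.injective_iterate_apply ha).tendsto_cofinite.eventually
    (eventually_cofinite_ne b)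

theorem Matrix.mulVec_iterate {ι R : Type*} [Fintype ι] [DecidableEq ι] [Semiring R]
    (A : Matrix ι ι R) (k : ℕ) (v : ι → R) : (A *ᵥ ·)^[k] v = (A ^ k) *ᵥ v := by
  induction k with
  | zero => simp
  | succ k ih => rw [iterate_succ_apply', ih, mulVec_mulVec, pow_succ']

theorem Matrix.eq_zero_of_pow_mulVec_eq_self {ι K : Type*} [Fintype ι] [DecidableEq ι] [Field K]
    [IsAlgClosed K] {A : Matrix ι ι K} {m : ℕ} (hm : 0 < m)
    (hA : ∀ z, A.charpoly.IsRoot z → z ^ m ≠ 1) {v : ι → K} (hv : A ^ m *ᵥ v = v) : v = 0 := by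
  by_contra hv0
  have hone : (1 : K) ∈ spectrum K (A ^ m) := by
    rw [spectrum.mem_iff, map_one, ← mulVec_injective_iff_isUnit]
    intro hinj
    exact hv0 (hinj (by simp [sub_mulVec, hv]))
  rw [spectrum.map_pow_of_pos A hm] at hone
  obtain ⟨z, hz, hz1⟩ := hone
  exact hA z (mem_spectrum_iff_isRoot_charpoly.mp hz) hz1

theorem Matrix.pow_mulVec_ne_self {ι K : Type*} [Fintype ι] [DecidableEq ι] [Field K]
    [IsAlgClosed K] [CharZero K] {A : Matrix ι ι ℤ} {m : ℕ} (hm : 0 < m)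
    (hA : ∀ z : K, (A.map (Int.cast : ℤ → K)).charpoly.IsRoot z → z ^ m ≠ 1) {v : ι → ℤ}
    (hv : v ≠ 0) : A ^ m *ᵥ v ≠ v := by
  intro hfix
  have hmap : A.map (Int.cast : ℤ → K) ^ m = (A ^ m).map Int.cast :=
    (map_pow (Int.castRingHom K).mapMatrix A m).symm
  have hcast : A.map (Int.cast : ℤ → K) ^ m *ᵥ (Int.cast ∘ v) = Int.cast ∘ v := by
    ext i
    rw [hmap]
    exact (RingHom.map_mulVec (Int.castRingHom K) (A ^ m) v i).symm.trans (by rw [hfix]; rfl)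
  apply hv
  ext i
  simpa using congrFun (eq_zero_of_pow_mulVec_eq_self hm hA hcast) i

theorem Matrix.sum_vecMul_smul {ι R V : Type*} [Fintype ι] [Semiring R] [AddCommMonoid V]
    [Module R V] (A : Matrix ι ι R) (a : ι → R) (x : ι → V) :
    ∑ j, (a ᵥ* A) j • x j = ∑ i, a i • ∑ j, A i j • x j := by
  simp only [vecMul, dotProduct, Finset.sum_smul, Finset.smul_sum, mul_smul]
  exact Finset.sum_comm

theorem integral_toCircle_sum_zsmul_eq_zero {ι : Type*} [Fintype ι] {T : ℝ} [hT : Fact (0 < T)]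
    {c : ι → ℤ} (hc : c ≠ 0) :
    ∫ x : ι → AddCircle T, (AddCircle.toCircle (∑ j, c j • x j) : ℂ) = 0 := by
  classical
  obtain ⟨j₀, hj₀⟩ := Function.ne_iff.mp hc
  set t : AddCircle T := ↑(T / 2 / c j₀)
  have hhalf : (AddCircle.toCircle (c j₀ • t) : ℂ) = -1 := by
    have := fourier_add_half_inv_index hj₀ hT.out 0
    rwa [zero_add, fourier_apply, fourier_apply, smul_zero, AddCircle.toCircle_zero,
      Circle.coe_one] at this
  refine integral_eq_zero_of_add_right_eq_neg (g := Pi.single j₀ t) fun x ↦ ?_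
  have hsingle : ∑ j, c j • Pi.single j₀ t j = c j₀ • t := by simp [Pi.single_apply]
  simp only [Pi.add_apply, smul_add, Finset.sum_add_distrib]
  rw [hsingle, AddCircle.toCircle_add, Circle.coe_mul, hhalf, mul_neg_one]

/-- for an `n × n` integer matrix `M` with determinant `±1` and no complex
eigenvalue a root of unity, for every nonzero integer vector `a` and every integer
vector `b` there is `K` such that for all `k ≥ K` one has `(Mᵀ)ᵏ a ≠ b`, and
consequently the correlation integral
`∫ e^{2πi⟨a, Mᵏ x⟩} e^{-2πi⟨b, x⟩} dx` over the torus `(ℝ/ℤ)ⁿ` vanishes. -/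
theorem correlation_of_characters_eventually_zero
    (n : ℕ) (M : Matrix (Fin n) (Fin n) ℤ)
    (hdet : M.det = 1 ∨ M.det = -1)
    (hM : ∀ z : ℂ, (M.map (Int.cast : ℤ → ℂ)).charpoly.IsRoot z →
      ∀ m : ℕ, 1 ≤ m → z ^ m ≠ 1)
    (a b : Fin n → ℤ) (ha : a ≠ 0) :
    ∃ K : ℕ, ∀ k : ℕ, K ≤ k →
      (Mᵀ ^ k) *ᵥ a ≠ b ∧
      ∫ x : Fin n → AddCircle (1 : ℝ),
        ((AddCircle.toCircle (∑ i, a i • (∑ j, (M ^ k) i j • x j)) : ℂ) *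
          (AddCircle.toCircle (-(∑ i, b i • x i)) : ℂ)) ∂volume = 0 := by
  have hunit : IsUnit Mᵀ := by
    rw [isUnit_iff_isUnit_det, det_transpose]
    exact Int.isUnit_iff.mpr hdet
  have haperiodic : a ∉ periodicPts (Mᵀ *ᵥ ·) := by
    rintro ⟨m, hm, hperiodic⟩
    rw [IsPeriodicPt, IsFixedPt, mulVec_iterate] at hperiodic
    refine pow_mulVec_ne_self (K := ℂ) hm (fun z hz ↦ hM z ?_ m hm) ha hperiodic
    rwa [transpose_map, charpoly_transpose] at hz
  obtain ⟨K, hK⟩ := eventually_atTop.mp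
    ((mulVec_injective_of_isUnit hunit).eventually_iterate_apply_ne haperiodic b)
  refine ⟨K, fun k hk ↦ ?_⟩
  have hne : Mᵀ ^ k *ᵥ a ≠ b := mulVec_iterate Mᵀ k a ▸ hK k hk
  refine ⟨hne, ?_⟩
  have hintegrand : ∀ x : Fin n → AddCircle (1 : ℝ),
      (AddCircle.toCircle (∑ i, a i • ∑ j, (M ^ k) i j • x j) : ℂ) *
        AddCircle.toCircle (-(∑ i, b i • x i)) =
      AddCircle.toCircle (∑ j, (Mᵀ ^ k *ᵥ a - b) j • x j) := fun x ↦ by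
    rw [← Circle.coe_mul, ← AddCircle.toCircle_add, ← sum_vecMul_smul, ← mulVec_transpose,
      transpose_pow]
    simp only [Pi.sub_apply, sub_smul, Finset.sum_sub_distrib, ← sub_eq_add_neg]
  simp_rw [hintegrand]
  exact integral_toCircle_sum_zsmul_eq_zero (sub_ne_zero.mpr hne)
end

section
/- Let r ≥ 1 and s ≥ 1, let F be the free group on r generators, and let N = F/ℓ_s(F) be the free nilpotent group of rank r obtained by quotienting F by the s-th term of its lower central series (ℓ_0(F) = F, ℓ_{i+1}(F) = [F, ℓ_i(F)]). Then the homomorphism Aut(N) → Aut(N/[N,N]) induced by the abelianization map is surjective; that is, every automorphism of the abelianization of N lifts to an automorphism of N. -/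
/-!
`N` is free in the variety of groups `G` with `ℓ_s(G) = 1`, so homomorphisms out of `N` lift
along surjections onto such groups. Lifting `φ` along `N → N/[N,N]` gives an endomorphism `ψ`
of `N` inducing `φ`. It is onto because in a nilpotent group a subgroup that generates `G`
together with `[G,G]` is all of `G`. Lifting the identity along `ψ` gives a section `σ`, onto
for the same reason (it induces `φ⁻¹`), so `ψ` is also injective.
-/

/-- The free nilpotent group of step size `s` and rank `r`: the quotient of the free
group on `r` generators by the `s`-th term of its lower central series. -/
abbrev FreeNilpotent (r s : ℕ) : Type :=
  FreeGroup (Fin r) ⧸ Subgroup.lowerCentralSeries (⊤ : Subgroup (FreeGroup (Fin r))) s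

open scoped commutatorElement

namespace Subgroup

variable {G : Type*} [Group G]

theorem commutator_le_of_sup_center_eq_top {H : Subgroup G} (h : H ⊔ center G = ⊤) :
    _root_.commutator G ≤ H := by
  rw [_root_.commutator_def, commutator_le]
  intro x _ y _
  obtain ⟨a, ha, z, hz, rfl⟩ := mem_sup_of_normal_right.mp (h ▸ mem_top x)
  obtain ⟨b, hb, w, hw, rfl⟩ := mem_sup_of_normal_right.mp (h ▸ mem_top y)
  have hcomm : ⁅a * z, b * w⁆ = ⁅a, b⁆ := by
    have hz₁ : ∀ g : G, ⁅z, g⁆ = 1 := fun g =>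
      commutatorElement_eq_one_iff_mul_comm.mpr (mem_center_iff.mp hz g).symm
    have hw₁ : ∀ g : G, ⁅g, w⁆ = 1 := fun g =>
      commutatorElement_eq_one_iff_mul_comm.mpr (mem_center_iff.mp hw g)
    simp [commutatorElement_mul_left_eq_conj_mul, commutatorElement_mul_right_eq_mul_conj, hz₁, hw₁]
  rw [hcomm, commutatorElement_def]
  exact H.mul_mem (H.mul_mem (H.mul_mem ha hb) (H.inv_mem ha)) (H.inv_mem hb)

theorem eq_top_of_sup_commutator_eq_top [Group.IsNilpotent G] {H : Subgroup G}
    (h : H ⊔ _root_.commutator G = ⊤) : H = ⊤ := by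
  -- Induction on the class: modulo the centre `H` is everything, and `H ⊔ center G = ⊤` forces
  -- `[G,G] ≤ H`.
  refine Group.nilpotent_center_quotient_ind (P := fun G _ _ => ∀ H : Subgroup G,
    H ⊔ _root_.commutator G = ⊤ → H = ⊤) G (fun G _ _ H _ => Subsingleton.elim H ⊤)
    (fun G _ _ ih H h => ?_) H h
  set π := QuotientGroup.mk' (center G)
  have hπ : Function.Surjective π := QuotientGroup.mk'_surjective _
  have hmap : H.map π = ⊤ := ih _ <| by
    rw [_root_.commutator_def, ← MonoidHom.range_eq_top.mpr hπ, ← map_commutator_eq, ← map_sup, h,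
      ← MonoidHom.range_eq_map]
  have hZ : H ⊔ center G = ⊤ := by
    rw [← QuotientGroup.ker_mk' (center G), ← comap_map_eq, hmap, comap_top]
  rwa [sup_eq_left.mpr (commutator_le_of_sup_center_eq_top hZ)] at h

theorem lowerCentralSeries_le_ker {K : Type*} [Group K] {n : ℕ}
    (hK : (⊤ : Subgroup K).lowerCentralSeries n = ⊥) (f : G →* K) :
    (⊤ : Subgroup G).lowerCentralSeries n ≤ f.ker := by
  rw [← map_eq_bot_iff, map_lowerCentralSeries, ← le_bot_iff, ← hK]
  exact lowerCentralSeries_mono n le_top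

theorem lowerCentralSeries_quotient_lowerCentralSeries_eq_bot (n : ℕ) :
    (⊤ : Subgroup (G ⧸ (⊤ : Subgroup G).lowerCentralSeries n)).lowerCentralSeries n = ⊥ := by
  rw [← map_top_of_surjective _ (QuotientGroup.mk'_surjective _), ← map_lowerCentralSeries,
    QuotientGroup.map_mk'_self]

end Subgroup

theorem MonoidHom.surjective_of_surjective_comp_abelianization {G K : Type*} [Group G] [Group K]
    [Group.IsNilpotent G] (f : K →* G) (hf : Function.Surjective (Abelianization.of ∘ f)) :
    Function.Surjective f := by
  rw [← range_eq_top]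
  refine Subgroup.eq_top_of_sup_commutator_eq_top (eq_top_iff.mpr fun g _ => ?_)
  obtain ⟨k, hk⟩ := hf (Abelianization.of g)
  have hg : (f k)⁻¹ * g ∈ _root_.commutator G := by
    rw [← Abelianization.ker_of, mem_ker, map_mul, map_inv,
      ← Function.comp_apply (f := Abelianization.of), hk, inv_mul_cancel]
  simpa using Subgroup.mul_mem_sup (MonoidHom.mem_range.mpr ⟨k, rfl⟩ : f k ∈ f.range) hg

namespace FreeNilpotent

variable {r s : ℕ}

theorem exists_lift {G A : Type*} [Group G] [Group A] (p : G →* A) (hp : Function.Surjective p)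
    (hG : (⊤ : Subgroup G).lowerCentralSeries s = ⊥) (φ : FreeNilpotent r s →* A) :
    ∃ ψ : FreeNilpotent r s →* G, p.comp ψ = φ := by
  let f : FreeGroup (Fin r) →* G :=
    FreeGroup.lift fun i => Function.surjInv hp (φ (FreeGroup.of i))
  refine ⟨QuotientGroup.lift _ f (Subgroup.lowerCentralSeries_le_ker hG f), ?_⟩
  refine QuotientGroup.monoidHom_ext _ (FreeGroup.ext_hom _ _ fun i => ?_)
  simp [f, Function.surjInv_eq hp]

end FreeNilpotent

theorem freeNilpotent_aut_to_aut_abelianization_surjective_general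
    (r s : ℕ)
    (φ : Abelianization (FreeNilpotent r s) ≃* Abelianization (FreeNilpotent r s)) :
    ∃ ψ : FreeNilpotent r s ≃* FreeNilpotent r s,
      ∀ x : FreeNilpotent r s, Abelianization.of (ψ x) = φ (Abelianization.of x) := by
  set N := FreeNilpotent r s
  have hN : (⊤ : Subgroup N).lowerCentralSeries s = ⊥ :=
    Subgroup.lowerCentralSeries_quotient_lowerCentralSeries_eq_bot s
  have : Group.IsNilpotent N := Subgroup.nilpotent_iff_lowerCentralSeries.mpr ⟨s, hN⟩
  have hof : Function.Surjective (Abelianization.of : N →* Abelianization N) :=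
    QuotientGroup.mk'_surjective _
  obtain ⟨ψ, hψ⟩ := FreeNilpotent.exists_lift _ hof hN (φ.toMonoidHom.comp Abelianization.of)
  have hψ_surj : Function.Surjective ψ := ψ.surjective_of_surjective_comp_abelianization <| by
    rw [← MonoidHom.coe_comp, hψ]
    exact φ.surjective.comp hof
  obtain ⟨σ, hσ⟩ := FreeNilpotent.exists_lift ψ hψ_surj hN (MonoidHom.id N)
  have hψσ : Function.LeftInverse ψ σ := DFunLike.congr_fun hσ
  have hσ_ab : ∀ y, φ (Abelianization.of (σ y)) = Abelianization.of y := fun y =>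
    (DFunLike.congr_fun hψ (σ y)).symm.trans (congrArg _ (hψσ y))
  have hσ_surj : Function.Surjective σ := σ.surjective_of_surjective_comp_abelianization <| by
    intro a
    obtain ⟨y, hy⟩ := hof (φ a)
    exact ⟨y, φ.injective ((hσ_ab y).trans hy)⟩
  have hψ_inj : Function.Injective ψ := (hψσ.rightInverse_of_surjective hσ_surj).injective
  exact ⟨MulEquiv.ofBijective ψ ⟨hψ_inj, hψ_surj⟩, DFunLike.congr_fun hψ⟩

/-- for `r, s ≥ 1`, every automorphism of the abelianization of the free
nilpotent group `N = F_r / ℓ_s(F_r)` lifts to an automorphism of `N`; that is, the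
homomorphism `Aut(N) → Aut(N/[N,N])` induced by the abelianization map is surjective. -/
theorem freeNilpotent_aut_to_aut_abelianization_surjective
    (r s : ℕ) (hr : 1 ≤ r) (hs : 1 ≤ s)
    (φ : Abelianization (FreeNilpotent r s) ≃* Abelianization (FreeNilpotent r s)) :
    ∃ ψ : FreeNilpotent r s ≃* FreeNilpotent r s,
      ∀ x : FreeNilpotent r s, Abelianization.of (ψ x) = φ (Abelianization.of x) :=
  freeNilpotent_aut_to_aut_abelianization_surjective_general r s φ
end
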